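/- arXiv:1605.09099 — 2 statements merged into one kernel-verified Lean document; each statement's English description precedes it below -/
import Mathlib

section
/- Let e be a degree one edge of a triangulation, T the unique (model) tetrahedron incident to e, and e′ the edge of T opposite e. Then: (i) the only 3-2 move whose three tetrahedra include T is the 3-2 move performed along e′, and it is possible only when e′ has degree three with its other two incident tetrahedra distinct from T and from each other; (ii) the only 2-3 moves involving T are those performed on one of the two faces of T not incident to e, and the two choices give the same configuration up to symmetry. Consequently there are exactly two local ways in which a degree one edge can be created: one via a 2-3 move (the reverse of (i)) in which the two tetrahedra before the move are distinct, and one via a 3-2 move (the reverse of (ii)) in which the three tetrahedra before the move are distinct. -/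
/-!
Formalization framework for triangulations of three-manifolds
(Matveev/Piergallini-style triangulations, following Wheeler,
"Connectivity of triangulations without degree one edges under 2-3 and 3-2 moves").

A triangulation is a finite family of oriented model tetrahedra together with
orientation-reversing face pairings; no face is glued to itself, faces may be left
unglued (boundary faces).  The face of a model tetrahedron opposite vertex `i` is
labelled `i`; a pairing of face `(t, i)` with face `(t', i')` is recorded together
with the induced simplicial vertex correspondence, extended to a permutation
`σ` of `Fin 4` with `σ i = i'`.  Since all model tetrahedra are identically
oriented, a face pairing is orientation-reversing exactly when `σ` is odd.
-/

namespace Paper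

open Equiv

structure Tri : Type 1 where
  ι : Type
  fin : Fintype ι
  dec : DecidableEq ι
  glue : ι × Fin 4 → Option ((ι × Fin 4) × Perm (Fin 4))
  glue_ne : ∀ F P, glue F = some P → P.1 ≠ F
  glue_symm : ∀ F F' σ, glue F = some (F', σ) → glue F' = some (F, σ⁻¹)
  glue_vertex : ∀ F F' σ, glue F = some (F', σ) → σ F.2 = F'.2
  glue_orient : ∀ F F' σ, glue F = some (F', σ) → Perm.sign σ = -1

attribute [instance] Tri.fin Tri.dec

/-- Every face is paired with another face (the complex has no boundary). -/
def Tri.Boundaryless (T : Tri) : Prop := ∀ F, T.glue F ≠ none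

/-- An unordered pair of distinct vertex labels of a model tetrahedron. -/
def EdgePair : Type := {s : Finset (Fin 4) // s.card = 2}

def epair (a b : Fin 4) (h : a ≠ b) : EdgePair := ⟨{a, b}, Finset.card_pair h⟩

def EdgePair.map (s : EdgePair) (π : Perm (Fin 4)) : EdgePair :=
  ⟨s.1.image π, by rw [Finset.card_image_of_injective _ π.injective, s.2]⟩

/-- A model edge: a model tetrahedron together with a pair of its vertices. -/
def Tri.ModelEdge (T : Tri) : Type := T.ι × EdgePair

/-- Two model edges are identified across a single face pairing. -/
def Tri.edgeAdj (T : Tri) : T.ModelEdge → T.ModelEdge → Prop := fun e f =>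
  ∃ (i : Fin 4) (G : T.ι × Fin 4) (σ : Perm (Fin 4)),
    i ∉ e.2.1 ∧ T.glue (e.1, i) = some (G, σ) ∧ f.1 = G.1 ∧ f.2.1 = e.2.1.image σ

/-- Edges of the triangulation: classes of model edges under the identifications. -/
def Tri.EdgeClass (T : Tri) : Type := Quot T.edgeAdj

def Tri.edgeOf (T : Tri) (e : T.ModelEdge) : T.EdgeClass := Quot.mk _ e

/-- The degree of an edge of the triangulation: the number of model edges
identified to form it. -/
noncomputable def Tri.degree (T : Tri) (E : T.EdgeClass) : ℕ :=
  Nat.card {e : T.ModelEdge // T.edgeOf e = E}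

def Tri.HasDegOneEdge (T : Tri) : Prop := ∃ e : T.ModelEdge, T.degree (T.edgeOf e) = 1

/-- An edge lying in an unglued (boundary) face. -/
def Tri.IsBoundaryEdge (T : Tri) (E : T.EdgeClass) : Prop :=
  ∃ (f : T.ModelEdge) (i : Fin 4), T.edgeOf f = E ∧ i ∉ f.2.1 ∧ T.glue (f.1, i) = none

/-- Identification of model vertices across a single face pairing. -/
def Tri.vertAdj (T : Tri) : T.ι × Fin 4 → T.ι × Fin 4 → Prop := fun v w =>
  ∃ (i : Fin 4) (G : T.ι × Fin 4) (σ : Perm (Fin 4)),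
    i ≠ v.2 ∧ T.glue (v.1, i) = some (G, σ) ∧ w = (G.1, σ v.2)

def Tri.VertClass (T : Tri) : Type := Quot T.vertAdj

noncomputable def Tri.vertexCount (T : Tri) : ℕ := Nat.card T.VertClass

/-! ### The underlying topological space -/

instance (T : Tri) : TopologicalSpace T.ι := ⊥

def Tri.Pt (T : Tri) : Type := T.ι × (stdSimplex ℝ (Fin 4))

instance (T : Tri) : TopologicalSpace T.Pt :=
  inferInstanceAs (TopologicalSpace (T.ι × (stdSimplex ℝ (Fin 4))))

/-- Identification of points of the disjoint union of the model tetrahedra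
(in barycentric coordinates) induced by a face pairing. -/
def Tri.spaceRel (T : Tri) : T.Pt → T.Pt → Prop := fun p q =>
  ∃ (i : Fin 4) (G : T.ι × Fin 4) (σ : Perm (Fin 4)),
    T.glue (p.1, i) = some (G, σ) ∧ (p.2 : Fin 4 → ℝ) i = 0 ∧
    q.1 = G.1 ∧ (q.2 : Fin 4 → ℝ) = (p.2 : Fin 4 → ℝ) ∘ ⇑σ.symm

/-- The underlying space of the triangulation. -/
def Tri.Space (T : Tri) : Type := Quot T.spaceRel

instance (T : Tri) : TopologicalSpace T.Space :=
  inferInstanceAs (TopologicalSpace (Quot T.spaceRel))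

def vpoint (v : Fin 4) : stdSimplex ℝ (Fin 4) :=
  ⟨fun j => if j = v then 1 else 0, by
    refine ⟨fun j => ?_, by simp⟩
    dsimp only; split <;> norm_num⟩

def Tri.IsVertexPoint (T : Tri) (x : T.Space) : Prop :=
  ∃ (t : T.ι) (v : Fin 4), x = Quot.mk _ (t, vpoint v)

/-- The underlying space of the associated ideal triangulation: the space with
the vertices removed. -/
def Tri.IdealSpace (T : Tri) : Type := {x : T.Space // ¬ T.IsVertexPoint x}

instance (T : Tri) : TopologicalSpace T.IdealSpace :=
  inferInstanceAs (TopologicalSpace {x : T.Space // ¬ T.IsVertexPoint x})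

/-- The link of a vertex of the triangulation, realized as the union of the
cross-section triangles at barycentric height `3/4` towards that vertex. -/
def Tri.link (T : Tri) (V : T.VertClass) : Set T.Space :=
  {x | ∃ (t : T.ι) (v : Fin 4) (p : stdSimplex ℝ (Fin 4)),
      Quot.mk T.vertAdj (t, v) = V ∧ (p : Fin 4 → ℝ) v = 3/4 ∧ x = Quot.mk _ (t, p)}

noncomputable def Sphere2 : Type := Metric.sphere (0 : EuclideanSpace ℝ (Fin 3)) 1

noncomputable instance : TopologicalSpace Sphere2 :=
  inferInstanceAs (TopologicalSpace (Metric.sphere (0 : EuclideanSpace ℝ (Fin 3)) 1))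

def Tri.HasSphericalLink (T : Tri) (V : T.VertClass) : Prop :=
  Nonempty (T.link V ≃ₜ Sphere2)

/-! ### Canonical permutations -/

def p23 : Perm (Fin 4) := Equiv.swap 2 3
def p01 : Perm (Fin 4) := Equiv.swap 0 1
/-- the `3`-cycle `(1 3 2)` -/
def c132 : Perm (Fin 4) := Equiv.swap 1 3 * Equiv.swap 3 2
/-- the `3`-cycle `(1 2 3)` -/
def c123 : Perm (Fin 4) := Equiv.swap 1 2 * Equiv.swap 2 3
/-- the permutation `(0 1)(2 3)` -/
def c01x23 : Perm (Fin 4) := Equiv.swap 0 1 * Equiv.swap 2 3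
/-- the `3`-cycle `(0 1 2)` -/
def c012 : Perm (Fin 4) := Equiv.swap 0 1 * Equiv.swap 1 2
/-- the `3`-cycle `(0 1 3)` -/
def c013 : Perm (Fin 4) := Equiv.swap 0 1 * Equiv.swap 1 3
/-- the `4`-cycle `(0 3 1 2)` -/
def aV : Perm (Fin 4) := Equiv.swap 0 3 * Equiv.swap 3 1 * Equiv.swap 1 2
/-- the permutation `(0 3)(1 2)` -/
def gV : Perm (Fin 4) := Equiv.swap 0 3 * Equiv.swap 1 2

/-! ### The 2-3 move

A 2-3 move replaces two distinct model tetrahedra `tA, tB` of `T`, glued to each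
other along a face, by three model tetrahedra `tP, tQ, tR` of `T'` arranged around
a new edge joining the two vertices (apexes) of `tA`, `tB` not on the shared face.
`πA, …, πR` record (orientation-preserving) identifications of the model tetrahedra
involved with the labelled tetrahedra of the canonical local picture of the move:
for `tA` the apex is vertex `πA 0` and the shared face is `(tA, πA 0)`; the new
central edge of `T'` is the edge `{πP 0, πP 1}` of `tP`.  The data `ρ, μ, Φ, τ`
record how the tetrahedra, faces and face pairings away from the move are carried
from `T` to `T'`. -/

structure Move23 (T T' : Tri) : Type where
  tA : T.ι
  tB : T.ι
  hAB : tA ≠ tB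
  πA : Perm (Fin 4)
  πB : Perm (Fin 4)
  hsA : Perm.sign πA = 1
  hsB : Perm.sign πB = 1
  hglue : T.glue (tA, πA 0) = some ((tB, πB 0), πB * p23 * πA⁻¹)
  tP : T'.ι
  tQ : T'.ι
  tR : T'.ι
  hPQ : tP ≠ tQ
  hPR : tP ≠ tR
  hQR : tQ ≠ tR
  πP : Perm (Fin 4)
  πQ : Perm (Fin 4)
  πR : Perm (Fin 4)
  hsP : Perm.sign πP = 1
  hsQ : Perm.sign πQ = 1
  hsR : Perm.sign πR = 1
  hPQglue : T'.glue (tP, πP 2) = some ((tQ, πQ 3), πQ * p23 * πP⁻¹)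
  hQRglue : T'.glue (tQ, πQ 2) = some ((tR, πR 3), πR * p23 * πQ⁻¹)
  hRPglue : T'.glue (tR, πR 2) = some ((tP, πP 3), πP * p23 * πR⁻¹)
  ρ : {t : T.ι // t ≠ tA ∧ t ≠ tB} ≃ {s : T'.ι // s ≠ tP ∧ s ≠ tQ ∧ s ≠ tR}
  μ : T.ι → Perm (Fin 4)
  hμ : ∀ t, Perm.sign (μ t) = 1
  Φ : T.ι × Fin 4 → T'.ι × Fin 4
  τ : T.ι × Fin 4 → Perm (Fin 4)
  hΦout : ∀ (t : T.ι) (h : t ≠ tA ∧ t ≠ tB) (j : Fin 4),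
    Φ (t, j) = ((ρ ⟨t, h⟩).val, μ t j) ∧ τ (t, j) = μ t
  hΦA : ∀ k : Fin 4, k ≠ 0 →
    Φ (tA, πA k) = ![(tP, πP 1), (tQ, πQ 1), (tR, πR 1), (tP, πP 1)] k ∧
    τ (tA, πA k) = ![1, πQ * πA⁻¹, πR * c132 * πA⁻¹, πP * c123 * πA⁻¹] k
  hΦB : ∀ k : Fin 4, k ≠ 0 →
    Φ (tB, πB k) = ![(tQ, πQ 0), (tQ, πQ 0), (tP, πP 0), (tR, πR 0)] k ∧
    τ (tB, πB k) = ![1, πQ * c01x23 * πB⁻¹, πP * c012 * πB⁻¹, πR * c013 * πB⁻¹] k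
  hcompat : ∀ F G σ, F ≠ (tA, πA 0) → F ≠ (tB, πB 0) →
      T.glue F = some (G, σ) → T'.glue (Φ F) = some (Φ G, τ G * σ * (τ F)⁻¹)
  hcompat_none : ∀ F, F ≠ (tA, πA 0) → F ≠ (tB, πB 0) →
      T.glue F = none → T'.glue (Φ F) = none

/-- The new central (degree three) edge of a 2-3 move, as a model edge of `T'`. -/
def Move23.centralEdge {T T' : Tri} (m : Move23 T T') : T'.ModelEdge :=
  (m.tP, epair (m.πP 0) (m.πP 1) (m.πP.injective.ne (by decide)))

/-- Correspondence between (model) edges of `T` and of `T'` under a 2-3 move: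
every model edge not on the central edge survives, carried by the face
correspondence `Φ, τ` through any face containing it that is not the disappearing
shared face. -/
def Move23.edgeCorr {T T' : Tri} (m : Move23 T T') :
    T.ModelEdge → T'.ModelEdge → Prop := fun e f =>
  ∃ i : Fin 4, i ∉ e.2.1 ∧ (e.1, i) ≠ (m.tA, m.πA 0) ∧ (e.1, i) ≠ (m.tB, m.πB 0) ∧
    f.1 = (m.Φ (e.1, i)).1 ∧ f.2 = e.2.map (m.τ (e.1, i))

/-- `T` and `T'` are related by a 2-3 move. -/
def Pachner23 (T T' : Tri) : Prop := Nonempty (Move23 T T')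

/-- `T` and `T'` are related by a 2-3 move or by a 3-2 move. -/
def PachnerStep (T T' : Tri) : Prop := Pachner23 T T' ∨ Pachner23 T' T

/-- connectivity by a sequence of 2-3 and 3-2 moves -/
def MovePath (T T' : Tri) : Prop :=
  ∃ (N : ℕ) (seq : Fin (N + 1) → Tri), seq 0 = T ∧ seq (Fin.last N) = T' ∧
    ∀ k : Fin N, PachnerStep (seq k.castSucc) (seq k.succ)

/-- connectivity by a sequence of 2-3 and 3-2 moves in which no triangulation,
including the two endpoints, has a degree one edge -/
def NoDegOnePath (T T' : Tri) : Prop :=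
  ∃ (N : ℕ) (seq : Fin (N + 1) → Tri), seq 0 = T ∧ seq (Fin.last N) = T' ∧
    (∀ k, ¬ (seq k).HasDegOneEdge) ∧
    ∀ k : Fin N, PachnerStep (seq k.castSucc) (seq k.succ)

/-- The opposite edge: the complementary pair of vertices. -/
def EdgePair.compl (s : EdgePair) : EdgePair :=
  ⟨s.1ᶜ, by simp [Finset.card_compl, s.2]⟩

end Paper

open Paper

/-!
A degree one edge `(t, s)` is the only model edge in its class, so every face of `t`
containing it is glued back to `t`. The shared face of a 2-3 move joins two distinct
tetrahedra, so it cannot contain `s`: this is (ii). Around the central edge of a 3-2 move,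
the two faces of each tetrahedron containing the central edge are glued to the other two
tetrahedra, so `s` lies in neither of them and is the edge opposite the central one: this
is (i). The three model edges of the central edge are closed under the face
identifications, so they form the whole class and its degree is three.
-/

namespace Paper

open Equiv

def EdgePair.edge01 (π : Perm (Fin 4)) : EdgePair :=
  epair (π 0) (π 1) (π.injective.ne (by decide))

namespace EdgePair

lemma edge01_map (π π' : Perm (Fin 4)) : (edge01 π).map (π' * p23 * π⁻¹) = edge01 π' := by
  have h0 : p23 0 = 0 := by decide
  have h1 : p23 1 = 1 := by decide
  apply Subtype.ext
  simp [EdgePair.map, edge01, epair, Finset.image_insert, h0, h1]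

lemma notMem_edge01_iff (π : Perm (Fin 4)) (i : Fin 4) :
    i ∉ (edge01 π).1 ↔ i = π 2 ∨ i = π 3 := by
  obtain ⟨j, rfl⟩ := π.surjective i
  simp only [edge01, epair, Finset.mem_insert, Finset.mem_singleton, π.injective.eq_iff]
  fin_cases j <;> decide

lemma compl_eq_edge01 {s : EdgePair} {π : Perm (Fin 4)} (h2 : π 2 ∈ s.1) (h3 : π 3 ∈ s.1) :
    s.compl = edge01 π := by
  have hs : s.1 = {π 2, π 3} := by
    refine (Finset.eq_of_subset_of_card_le (Finset.insert_subset h2 ?_) ?_).symm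
    · exact Finset.singleton_subset_iff.mpr h3
    · rw [s.2, Finset.card_pair (π.injective.ne (by decide))]
  apply Subtype.ext
  ext x
  obtain ⟨j, rfl⟩ := π.surjective x
  simp only [EdgePair.compl, hs, edge01, epair, Finset.mem_compl, Finset.mem_insert,
    Finset.mem_singleton, π.injective.eq_iff]
  fin_cases j <;> decide

end EdgePair

open EdgePair

namespace Tri

variable {T : Tri}

lemma edgeAdj_symm {e f : T.ModelEdge} (h : T.edgeAdj e f) : T.edgeAdj f e := by
  obtain ⟨i, G, σ, hi, hg, hf1, hf2⟩ := h
  refine ⟨G.2, (e.1, i), σ⁻¹, ?_, hf1 ▸ T.glue_symm _ _ _ hg, rfl, ?_⟩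
  · rw [hf2, ← T.glue_vertex _ _ _ hg, σ.injective.mem_finset_image]
    exact hi
  · rw [hf2, Finset.image_image]
    simp

lemma mem_of_edgeOf_eq {S : Set T.ModelEdge} (hS : ∀ a b, T.edgeAdj a b → a ∈ S → b ∈ S)
    {e f : T.ModelEdge} (he : e ∈ S) (hf : T.edgeOf f = T.edgeOf e) : f ∈ S := by
  have hinv : ∀ a b, Relation.EqvGen T.edgeAdj a b → (a ∈ S ↔ b ∈ S) := by
    intro a b hab
    induction hab with
    | rel a b hr => exact ⟨hS a b hr, hS b a (edgeAdj_symm hr)⟩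
    | refl => exact Iff.rfl
    | symm _ _ _ ih => exact ih.symm
    | trans _ _ _ _ _ ih₁ ih₂ => exact ih₁.trans ih₂
  exact (hinv f e (Quot.eqvGen_exact hf)).mpr he

lemma degree_eq_ncard {S : Set T.ModelEdge} (hS : ∀ a b, T.edgeAdj a b → a ∈ S → b ∈ S)
    {e : T.ModelEdge} (he : e ∈ S) (hSe : ∀ f ∈ S, T.edgeOf f = T.edgeOf e) :
    T.degree (T.edgeOf e) = S.ncard := by
  rw [degree, ← Nat.card_coe_set_eq]
  exact Nat.card_congr (Equiv.subtypeEquivRight fun f => ⟨mem_of_edgeOf_eq hS he, hSe f⟩)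

lemma eq_of_edgeOf_eq_of_degree_eq_one {e f : T.ModelEdge}
    (hdeg : T.degree (T.edgeOf e) = 1) (hf : T.edgeOf f = T.edgeOf e) : f = e :=
  congrArg Subtype.val ((Nat.card_eq_one_iff_unique.mp hdeg).1.elim ⟨f, hf⟩ ⟨e, rfl⟩)

lemma mem_of_degree_eq_one_of_glue {t : T.ι} {s : EdgePair} {i : Fin 4}
    {G : T.ι × Fin 4} {σ : Perm (Fin 4)} (hdeg : T.degree (T.edgeOf (t, s)) = 1)
    (hg : T.glue (t, i) = some (G, σ)) (hG : G.1 ≠ t) : i ∈ s.1 := by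
  by_contra hi
  have hadj : T.edgeAdj (t, s) (G.1, s.map σ) := ⟨i, G, σ, hi, hg, rfl, rfl⟩
  exact hG (congrArg Prod.fst (eq_of_edgeOf_eq_of_degree_eq_one hdeg (Quot.sound hadj).symm))

lemma compl_eq_edge01_of_degree_eq_one {t : T.ι} {s : EdgePair} {π : Perm (Fin 4)}
    {G G' : T.ι × Fin 4} {σ σ' : Perm (Fin 4)} (hdeg : T.degree (T.edgeOf (t, s)) = 1)
    (h2 : T.glue (t, π 2) = some (G, σ)) (hG : G.1 ≠ t)
    (h3 : T.glue (t, π 3) = some (G', σ')) (hG' : G'.1 ≠ t) :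
    s.compl = edge01 π :=
  compl_eq_edge01 (mem_of_degree_eq_one_of_glue hdeg h2 hG)
    (mem_of_degree_eq_one_of_glue hdeg h3 hG')

lemma glue_symm_p23 {t t' : T.ι} {π π' : Perm (Fin 4)}
    (h : T.glue (t, π 2) = some ((t', π' 3), π' * p23 * π⁻¹)) :
    T.glue (t', π' 3) = some ((t, π 2), π * p23 * π'⁻¹) := by
  have hp23 : p23⁻¹ = p23 := by decide
  simpa [mul_inv_rev, hp23, mul_assoc] using T.glue_symm _ _ _ h

lemma edgeAdj_edge01_of_glue {t t' : T.ι} {j : Fin 4} {π π' : Perm (Fin 4)}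
    (h : T.glue (t, π 2) = some ((t', j), π' * p23 * π⁻¹)) :
    T.edgeAdj (t, edge01 π) (t', edge01 π') :=
  ⟨π 2, (t', j), _, (notMem_edge01_iff π _).mpr (Or.inl rfl), h, rfl,
    congrArg Subtype.val (edge01_map π π').symm⟩

lemma eq_of_edgeAdj_edge01 {t t₂ t₃ : T.ι} {j₂ j₃ : Fin 4} {π π₂ π₃ : Perm (Fin 4)}
    (h2 : T.glue (t, π 2) = some ((t₂, j₂), π₂ * p23 * π⁻¹))
    (h3 : T.glue (t, π 3) = some ((t₃, j₃), π₃ * p23 * π⁻¹))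
    {b : T.ModelEdge} (hb : T.edgeAdj (t, edge01 π) b) :
    b = (t₂, edge01 π₂) ∨ b = (t₃, edge01 π₃) := by
  obtain ⟨i, G, σ, hi, hg, hb1, hb2⟩ := hb
  have hb' : b = (G.1, (edge01 π).map σ) := Prod.ext hb1 (Subtype.ext hb2)
  rcases (notMem_edge01_iff π i).mp hi with rfl | rfl
  · simp only [h2, Option.some.injEq, Prod.mk.injEq] at hg
    obtain ⟨rfl, rfl⟩ := hg
    exact Or.inl (hb'.trans (congrArg _ (edge01_map π π₂)))
  · simp only [h3, Option.some.injEq, Prod.mk.injEq] at hg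
    obtain ⟨rfl, rfl⟩ := hg
    exact Or.inr (hb'.trans (congrArg _ (edge01_map π π₃)))

lemma degree_edge01_eq_three {tP tQ tR : T.ι} {πP πQ πR : Perm (Fin 4)}
    (hPQglue : T.glue (tP, πP 2) = some ((tQ, πQ 3), πQ * p23 * πP⁻¹))
    (hQRglue : T.glue (tQ, πQ 2) = some ((tR, πR 3), πR * p23 * πQ⁻¹))
    (hRPglue : T.glue (tR, πR 2) = some ((tP, πP 3), πP * p23 * πR⁻¹))
    (hPQ : tP ≠ tQ) (hPR : tP ≠ tR) (hQR : tQ ≠ tR) :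
    T.degree (T.edgeOf (tP, edge01 πP)) = 3 := by
  set S : Set T.ModelEdge := {(tP, edge01 πP), (tQ, edge01 πQ), (tR, edge01 πR)}
  have hclosed : ∀ a b, T.edgeAdj a b → a ∈ S → b ∈ S := by
    rintro a b hab (rfl | rfl | rfl)
    · rcases eq_of_edgeAdj_edge01 hPQglue (glue_symm_p23 hRPglue) hab with rfl | rfl
      exacts [Or.inr (Or.inl rfl), Or.inr (Or.inr rfl)]
    · rcases eq_of_edgeAdj_edge01 hQRglue (glue_symm_p23 hPQglue) hab with rfl | rfl
      exacts [Or.inr (Or.inr rfl), Or.inl rfl]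
    · rcases eq_of_edgeAdj_edge01 hRPglue (glue_symm_p23 hQRglue) hab with rfl | rfl
      exacts [Or.inl rfl, Or.inr (Or.inl rfl)]
  have hclass : ∀ f ∈ S, T.edgeOf f = T.edgeOf (tP, edge01 πP) := by
    rintro f (rfl | rfl | rfl)
    · rfl
    · exact (Quot.sound (edgeAdj_edge01_of_glue hPQglue)).symm
    · exact Quot.sound (edgeAdj_edge01_of_glue hRPglue)
  rw [degree_eq_ncard hclosed (Or.inl rfl) hclass, Set.ncard_eq_three]
  exact ⟨_, _, _, fun h => hPQ (congrArg Prod.fst h), fun h => hPR (congrArg Prod.fst h),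
    fun h => hQR (congrArg Prod.fst h), rfl⟩

end Tri

end Paper

open Paper.Tri

/-- **Anatomy of a degree one edge.**  Let `e = (t₀, s₀)` be a degree one edge of
`T`, so that `t₀` is the unique model tetrahedron incident to `e`, and let
`e' = (t₀, s₀ᶜ)` be the edge of `t₀` opposite `e`.  Then:
(i) the only 3-2 move on `T` whose three tetrahedra include `t₀` is the 3-2 move
performed along `e'`, which is then a degree three edge (whose three incident
tetrahedra are distinct, as required by the move); and
(ii) the only 2-3 moves on `T` involving `t₀` are those performed on one of the
two faces of `t₀` not incident to `e` (the faces `(t₀, i)` with `i ∈ s₀`).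
Reversing (i) gives the unique way a degree one edge arises from a 2-3 move
(applied to two distinct tetrahedra), and reversing (ii) gives the unique way a
degree one edge arises from a 3-2 move (applied to three distinct tetrahedra);
the distinctness of the tetrahedra involved is part of the data of a move. -/
theorem anatomy_of_degree_one_edge
    (T : Tri) (t₀ : T.ι) (s₀ : EdgePair)
    (hdeg : T.degree (T.edgeOf (t₀, s₀)) = 1) :
    (∀ (T'' : Tri) (m : Move23 T'' T),
        (m.tP = t₀ ∨ m.tQ = t₀ ∨ m.tR = t₀) →
        T.edgeOf m.centralEdge = T.edgeOf (t₀, s₀.compl) ∧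
        T.degree (T.edgeOf (t₀, s₀.compl)) = 3) ∧
    (∀ (T'' : Tri) (m : Move23 T T''),
        (m.tA = t₀ → m.πA 0 ∈ s₀.1) ∧ (m.tB = t₀ → m.πB 0 ∈ s₀.1)) := by
  refine ⟨fun T'' m ht₀ => ?_, fun T'' m => ⟨fun hA => ?_, fun hB => ?_⟩⟩
  · suffices h : T.edgeOf (t₀, s₀.compl) = T.edgeOf m.centralEdge by
      rw [h]
      exact ⟨rfl, degree_edge01_eq_three m.hPQglue m.hQRglue m.hRPglue m.hPQ m.hPR m.hQR⟩
    rcases ht₀ with rfl | rfl | rfl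
    · rw [compl_eq_edge01_of_degree_eq_one hdeg m.hPQglue m.hPQ.symm
        (glue_symm_p23 m.hRPglue) m.hPR.symm]
      rfl
    · rw [compl_eq_edge01_of_degree_eq_one hdeg m.hQRglue m.hQR.symm
        (glue_symm_p23 m.hPQglue) m.hPQ]
      exact (Quot.sound (edgeAdj_edge01_of_glue m.hPQglue)).symm
    · rw [compl_eq_edge01_of_degree_eq_one hdeg m.hRPglue m.hPR
        (glue_symm_p23 m.hQRglue) m.hQR]
      exact Quot.sound (edgeAdj_edge01_of_glue m.hRPglue)
  · subst hA
    exact mem_of_degree_eq_one_of_glue hdeg m.hglue m.hAB.symm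
  · subst hB
    exact mem_of_degree_eq_one_of_glue hdeg (T.glue_symm _ _ _ m.hglue) m.hAB
end

section
/- Let (𝒯_i, 𝒯_{i+1}, …, 𝒯_{j-1}) be a sequence of triangulations in which each is obtained from the previous one by a 2-3 or 3-2 move, and suppose a degree one edge e is present in every triangulation of the sequence. Then the model tetrahedron T incident to e and the unique triangle incident to e are unchanged by every move in the sequence: no 2-3 or 3-2 move performed during the lifetime of the degree one edge alters T. -/
/-!
Formalization framework for triangulations of three-manifolds
(Matveev/Piergallini-style triangulations, following Wheeler,
"Connectivity of triangulations without degree one edges under 2-3 and 3-2 moves").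

A triangulation is a finite family of oriented model tetrahedra together with
orientation-reversing face pairings; no face is glued to itself, faces may be left
unglued (boundary faces).  The face of a model tetrahedron opposite vertex `i` is
labelled `i`; a pairing of face `(t, i)` with face `(t', i')` is recorded together
with the induced simplicial vertex correspondence, extended to a permutation
`σ` of `Fin 4` with `σ i = i'`.  Since all model tetrahedra are identically
oriented, a face pairing is orientation-reversing exactly when `σ` is odd.
-/

namespace Paper

open Equiv

/-- A 2-3 move does not alter the model tetrahedron carrying the model edge `a`:
that tetrahedron is not one of the tetrahedra removed by the move, and it is
carried, unchanged, to a tetrahedron of the new triangulation which is not one of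
the three new tetrahedra, with `a` carried along. -/
def Move23.Untouched {T T' : Tri} (m : Move23 T T')
    (a : T.ModelEdge) (b : T'.ModelEdge) : Prop :=
  ∃ h : a.1 ≠ m.tA ∧ a.1 ≠ m.tB,
    b.1 = (m.ρ ⟨a.1, h⟩).val ∧ b.2 = a.2.map (m.μ a.1) ∧
    b.1 ≠ m.tP ∧ b.1 ≠ m.tQ ∧ b.1 ≠ m.tR

end Paper

open Paper

/-!
A degree one model edge `e` of a tetrahedron `t` is its own edge class, so each of the two
faces of `t` through `e` is glued to a face of `t` itself. A 2-3 move cannot have `t` among the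
two removed tetrahedra: if `e` lies in their shared face, that face is glued to the other one;
otherwise `e` contains the apex of `t`, and the edge carried to the new triangulation contains
an endpoint of the new central edge in some new tetrahedron `X`. The two faces of `X` through
the central edge are glued to the other new tetrahedra, and every edge of `X` meeting the
central edge lies in one of them, so it cannot have degree one.
-/

namespace Paper

open Equiv

def Tri.GluedElsewhere (T : Tri) (t : T.ι) (j : Fin 4) : Prop :=
  ∃ G σ, T.glue (t, j) = some (G, σ) ∧ G.1 ≠ t

namespace Tri

variable (T : Tri)

theorem gluedElsewhere_of_glue {F G : T.ι × Fin 4} {σ : Perm (Fin 4)}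
    (h : T.glue F = some (G, σ)) (hne : G.1 ≠ F.1) :
    T.GluedElsewhere F.1 F.2 ∧ T.GluedElsewhere G.1 G.2 :=
  ⟨⟨G, σ, h, hne⟩, ⟨F, σ⁻¹, T.glue_symm F G σ h, hne.symm⟩⟩

theorem mem_of_degree_eq_one {f : T.ModelEdge} (hd : T.degree (T.edgeOf f) = 1) {j : Fin 4}
    (hj : T.GluedElsewhere f.1 j) : j ∈ f.2.1 := by
  by_contra hjf
  obtain ⟨G, σ, hg, hne⟩ := hj
  have hadj : T.edgeAdj f (G.1, f.2.map σ) := ⟨j, G, σ, hjf, hg, rfl, rfl⟩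
  have : Subsingleton {e // T.edgeOf e = T.edgeOf f} := (Nat.card_eq_one_iff_unique.mp hd).1
  have hself : (⟨f, rfl⟩ : {e // T.edgeOf e = T.edgeOf f}) = ⟨_, (Quot.sound hadj).symm⟩ :=
    Subsingleton.elim _ _
  exact hne (congrArg (fun e => e.1.1) hself).symm

theorem degree_ne_one_of_gluedElsewhere {x : T.ι} {j₁ j₂ v : Fin 4} (hj : j₁ ≠ j₂)
    (hv₁ : v ≠ j₁) (hv₂ : v ≠ j₂) (h₁ : T.GluedElsewhere x j₁) (h₂ : T.GluedElsewhere x j₂)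
    {s : EdgePair} (hv : v ∈ s.1) : T.degree (T.edgeOf (x, s)) ≠ 1 := by
  intro hd
  have hsub : ({v, j₁, j₂} : Finset (Fin 4)) ⊆ s.1 := by
    simp only [Finset.insert_subset_iff, Finset.singleton_subset_iff]
    exact ⟨hv, T.mem_of_degree_eq_one hd h₁, T.mem_of_degree_eq_one hd h₂⟩
  have hcard := Finset.card_le_card hsub
  rw [s.2, Finset.card_insert_of_notMem (by simp [hv₁, hv₂]), Finset.card_pair hj] at hcard
  omega

end Tri

namespace Move23

variable {T T' : Tri} (m : Move23 T T')

def NewTet (x : T'.ι) (π : Perm (Fin 4)) : Prop :=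
  (x, π) = (m.tP, m.πP) ∨ (x, π) = (m.tQ, m.πQ) ∨ (x, π) = (m.tR, m.πR)

theorem gluedElsewhere_of_newTet {x : T'.ι} {π : Perm (Fin 4)} (hx : m.NewTet x π) :
    T'.GluedElsewhere x (π 2) ∧ T'.GluedElsewhere x (π 3) := by
  have hPQ := T'.gluedElsewhere_of_glue m.hPQglue m.hPQ.symm
  have hQR := T'.gluedElsewhere_of_glue m.hQRglue m.hQR.symm
  have hRP := T'.gluedElsewhere_of_glue m.hRPglue m.hPR
  rcases hx with h | h | h <;> obtain ⟨rfl, rfl⟩ := Prod.mk.inj h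
  exacts [⟨hPQ.1, hRP.2⟩, ⟨hQR.1, hPQ.2⟩, ⟨hRP.1, hQR.2⟩]

theorem degree_ne_one_of_central_mem {x : T'.ι} {π : Perm (Fin 4)} (hx : m.NewTet x π)
    {c : Fin 4} (hc : c = 0 ∨ c = 1) {s : EdgePair} (hs : π c ∈ s.1) :
    T'.degree (T'.edgeOf (x, s)) ≠ 1 := by
  obtain ⟨h₂, h₃⟩ := m.gluedElsewhere_of_newTet hx
  refine T'.degree_ne_one_of_gluedElsewhere (π.injective.ne (by decide))
    (π.injective.ne ?_) (π.injective.ne ?_) h₂ h₃ hs <;> rcases hc with rfl | rfl <;> decide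

theorem exists_newTet_τ_apex_tA (i : Fin 4) (hi : i ≠ m.πA 0) :
    ∃ x π, m.NewTet x π ∧ (m.Φ (m.tA, i)).1 = x ∧ m.τ (m.tA, i) (m.πA 0) = π 0 := by
  obtain ⟨k, rfl⟩ := m.πA.surjective i
  have hk : k ≠ 0 := fun h => hi (congrArg m.πA h)
  obtain ⟨hΦ, hτ⟩ := m.hΦA k hk
  rcases (by omega : k = 1 ∨ k = 2 ∨ k = 3) with rfl | rfl | rfl <;>
    simp only [Matrix.cons_val] at hΦ hτ <;>
    simp only [hΦ, hτ, Perm.mul_apply, Perm.inv_def, symm_apply_apply]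
  · exact ⟨m.tQ, m.πQ, by simp [NewTet], rfl, rfl⟩
  · exact ⟨m.tR, m.πR, by simp [NewTet], rfl, congrArg _ (by decide)⟩
  · exact ⟨m.tP, m.πP, by simp [NewTet], rfl, congrArg _ (by decide)⟩

theorem exists_newTet_τ_apex_tB (i : Fin 4) (hi : i ≠ m.πB 0) :
    ∃ x π, m.NewTet x π ∧ (m.Φ (m.tB, i)).1 = x ∧ m.τ (m.tB, i) (m.πB 0) = π 1 := by
  obtain ⟨k, rfl⟩ := m.πB.surjective i
  have hk : k ≠ 0 := fun h => hi (congrArg m.πB h)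
  obtain ⟨hΦ, hτ⟩ := m.hΦB k hk
  rcases (by omega : k = 1 ∨ k = 2 ∨ k = 3) with rfl | rfl | rfl <;>
    simp only [Matrix.cons_val] at hΦ hτ <;>
    simp only [hΦ, hτ, Perm.mul_apply, Perm.inv_def, symm_apply_apply]
  · exact ⟨m.tQ, m.πQ, by simp [NewTet], rfl, congrArg _ (by decide)⟩
  · exact ⟨m.tP, m.πP, by simp [NewTet], rfl, congrArg _ (by decide)⟩
  · exact ⟨m.tR, m.πR, by simp [NewTet], rfl, congrArg _ (by decide)⟩

variable {m} {e : T.ModelEdge} {f : T'.ModelEdge}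

theorem fst_ne_of_apex_to_central (hdT : T.degree (T.edgeOf e) = 1)
    (hdT' : T'.degree (T'.edgeOf f) = 1) (hcorr : m.edgeCorr e f) {t : T.ι} {a c : Fin 4}
    (hshared : (t, a) = (m.tA, m.πA 0) ∨ (t, a) = (m.tB, m.πB 0))
    (haway : T.GluedElsewhere t a) (hc : c = 0 ∨ c = 1)
    (hcentral : ∀ i ≠ a, ∃ x π, m.NewTet x π ∧ (m.Φ (t, i)).1 = x ∧ m.τ (t, i) a = π c) :
    e.1 ≠ t := by
  intro het
  obtain ⟨i, -, hiA, hiB, hf₁, hf₂⟩ := hcorr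
  subst het
  have ha : a ∈ e.2.1 := T.mem_of_degree_eq_one hdT haway
  have hia : i ≠ a := by
    rintro rfl
    rcases hshared with h | h
    exacts [hiA h, hiB h]
  obtain ⟨x, π, hx, hΦ, hτ⟩ := hcentral i hia
  have hf : f = (x, f.2) := Prod.ext (hf₁.trans hΦ) rfl
  have hmem : π c ∈ f.2.1 := by
    rw [hf₂, ← hτ]
    exact Finset.mem_image_of_mem _ ha
  exact m.degree_ne_one_of_central_mem hx hc hmem (hf ▸ hdT')

theorem untouched_of_degree_eq_one (hdT : T.degree (T.edgeOf e) = 1)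
    (hdT' : T'.degree (T'.edgeOf f) = 1) (hcorr : m.edgeCorr e f) : m.Untouched e f := by
  have hA : e.1 ≠ m.tA := fst_ne_of_apex_to_central hdT hdT' hcorr (Or.inl rfl)
    (T.gluedElsewhere_of_glue m.hglue m.hAB.symm).1 (Or.inl rfl) m.exists_newTet_τ_apex_tA
  have hB : e.1 ≠ m.tB := fst_ne_of_apex_to_central hdT hdT' hcorr (Or.inr rfl)
    (T.gluedElsewhere_of_glue m.hglue m.hAB.symm).2 (Or.inr rfl) m.exists_newTet_τ_apex_tB
  obtain ⟨i, -, -, -, hf₁, hf₂⟩ := hcorr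
  obtain ⟨hΦ, hτ⟩ := m.hΦout e.1 ⟨hA, hB⟩ i
  obtain ⟨hP, hQ, hR⟩ := (m.ρ ⟨e.1, hA, hB⟩).2
  refine ⟨⟨hA, hB⟩, ?_, ?_, ?_, ?_, ?_⟩ <;> simp only [hf₁, hf₂, hΦ, hτ]
  exacts [hP, hQ, hR]

end Move23

end Paper

/-- If a degree one edge is present in every triangulation of a sequence of 2-3
and 3-2 moves, then the model tetrahedron incident to it (and hence the unique
triangle incident to it) is unchanged by every move of the sequence: no 2-3 or
3-2 move performed during the lifetime of a degree one edge alters its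
tetrahedron. -/
theorem degree_one_edge_tetrahedron_untouched
    (N : ℕ) (seq : Fin (N + 1) → Tri) (e : ∀ k, (seq k).ModelEdge)
    (hdeg : ∀ k, (seq k).degree ((seq k).edgeOf (e k)) = 1) (k : Fin N) :
    (∀ m : Move23 (seq k.castSucc) (seq k.succ),
        m.edgeCorr (e k.castSucc) (e k.succ) →
        m.Untouched (e k.castSucc) (e k.succ)) ∧
    (∀ m : Move23 (seq k.succ) (seq k.castSucc),
        m.edgeCorr (e k.succ) (e k.castSucc) →
        m.Untouched (e k.succ) (e k.castSucc)) :=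
  ⟨fun _ => Move23.untouched_of_degree_eq_one (hdeg _) (hdeg _),
   fun _ => Move23.untouched_of_degree_eq_one (hdeg _) (hdeg _)⟩
end
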